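/- arXiv:1602.06741 — 2 statements merged into one kernel-verified Lean document; each statement's English description precedes it below -/
import Mathlib

section
/- In a Radon plane, the constant c_t satisfies c_t(‖·‖) ≥ 3/4; that is, for every equilateral triangle Δ with unit sides, the sine s(Δ) of its sides is at least 3/4. -/
open Module

variable {V : Type*} [NormedAddCommGroup V] [NormedSpace ℝ V]

noncomputable def sine {V : Type*} [NormedAddCommGroup V] [NormedSpace ℝ V] (x y : V) : ℝ :=
  ⨅ t : ℝ, ‖x + t • y‖

def BOrth {V : Type*} [NormedAddCommGroup V] [NormedSpace ℝ V] (x y : V) : Prop :=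
  ∀ t : ℝ, ‖x‖ ≤ ‖x + t • y‖

noncomputable def cD (V : Type*) [NormedAddCommGroup V] [NormedSpace ℝ V] : ℝ :=
  sInf {r : ℝ | ∃ x y : V, ‖x‖ = 1 ∧ ‖y‖ = 1 ∧ BOrth x y ∧ r = sine y x}

noncomputable def cR (V : Type*) [NormedAddCommGroup V] [NormedSpace ℝ V] : ℝ :=
  sSup {r : ℝ | ∃ x y : V, ‖x‖ = 1 ∧ ‖y‖ = 1 ∧ r = |sine x y - sine y x|}

/-!
Fix a determinant form `ω` on the plane and let `N y = ‖ω (·) y‖` be the antinorm; then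
`sine x y * N y = |ω x y|` for all `x, y`. In a Radon plane `N` is proportional to the norm: if `φ`
is a norming functional of `v`, its kernel is Birkhoff orthogonal to `v` and hence, by symmetry,
`v` is Birkhoff orthogonal to the kernel; this gives `N u ≥ (N v / ‖v‖) φ u` for all `u`, and
summing these inequalities over a fine subdivision of a segment shows that `N / ‖·‖` cannot
decrease along it. As `ω x y = ω y z = ω z x`, the three sines of the triangle are then equal,
say to `s`. If `a` minimises `t ↦ ‖x + t y‖` and `c` minimises `t ↦ ‖z + t x‖`, then
`y + (1 - c) x` is Birkhoff orthogonal to `x`, so `x` is Birkhoff orthogonal to it, which yields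
`s ≥ 1 - a (1 - c)`. With the two cyclic variants and
`a (1 - c) · b (1 - a) · c (1 - b) = a (1 - a) · b (1 - b) · c (1 - c) ≤ 1 / 64` this forces
`s ≥ 3 / 4`.
-/

open Set Filter

theorem le_of_forall_sub_le_mul_sub {f ψ : ℝ → ℝ} {a b C : ℝ} (hab : a ≤ b)
    (h : ∀ s ∈ Icc a b, ∀ t ∈ Icc a b, s ≤ t → f s - f t ≤ C * (t - s) * (ψ t - ψ s)) :
    f a ≤ f b := by
  have hn : ∀ n : ℕ, 0 < n → f a - f b ≤ C * (b - a) * (ψ b - ψ a) / n := by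
    intro n hn0
    have hn' : (0 : ℝ) < n := Nat.cast_pos.2 hn0
    have hδ : 0 ≤ (b - a) / n := div_nonneg (by linarith) hn'.le
    set τ : ℕ → ℝ := fun k => a + k * ((b - a) / n)
    have hτ0 : τ 0 = a := by simp [τ]
    have hτn : τ n = b := by simp only [τ]; field_simp; ring
    have hτ_succ (k : ℕ) : τ (k + 1) - τ k = (b - a) / n := by simp only [τ]; push_cast; ring
    have hτ (k : ℕ) (hk : k ≤ n) : τ k ∈ Icc a b := by
      refine ⟨le_add_of_nonneg_right (mul_nonneg k.cast_nonneg hδ), hτn ▸ ?_⟩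
      simp only [τ]; gcongr
    calc f a - f b = ∑ k ∈ Finset.range n, (f (τ k) - f (τ (k + 1))) := by
          rw [Finset.sum_range_sub', hτ0, hτn]
      _ ≤ ∑ k ∈ Finset.range n, C * ((b - a) / n) * (ψ (τ (k + 1)) - ψ (τ k)) := by
          refine Finset.sum_le_sum fun k hk => ?_
          have hk := Finset.mem_range.1 hk
          rw [← hτ_succ k]
          exact h _ (hτ k hk.le) _ (hτ (k + 1) hk) (by linarith [hτ_succ k])
      _ = C * (b - a) * (ψ b - ψ a) / n := by
          rw [← Finset.mul_sum, Finset.sum_range_sub (fun k => ψ (τ k)), hτ0, hτn]; ring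
  refine sub_nonpos.1 <| ge_of_tendsto
    (tendsto_const_div_atTop_nhds_zero_nat (C * (b - a) * (ψ b - ψ a))) ?_
  filter_upwards [eventually_gt_atTop 0] using hn

theorem mul_one_sub_le_quarter_of_cyclic {a b c : ℝ} (hb : b ∈ Icc (0 : ℝ) 1)
    (hc : c ∈ Icc (0 : ℝ) 1) :
    a * (1 - c) ≤ 1 / 4 ∨ b * (1 - a) ≤ 1 / 4 ∨ c * (1 - b) ≤ 1 / 4 := by
  by_contra! h
  obtain ⟨h₁, h₂, h₃⟩ := h
  have hq (r : ℝ) : r * (1 - r) ≤ 1 / 4 := by nlinarith [sq_nonneg (2 * r - 1)]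
  have hq₀ {r : ℝ} (hr : r ∈ Icc (0 : ℝ) 1) : 0 ≤ r * (1 - r) :=
    mul_nonneg hr.1 (sub_nonneg.2 hr.2)
  have hlt := mul_lt_mul'' (mul_lt_mul'' h₁ h₂ (by norm_num) (by norm_num)) h₃ (by positivity)
    (by norm_num)
  have hle := mul_le_mul (mul_le_mul (hq a) (hq b) (hq₀ hb) (by norm_num)) (hq c) (hq₀ hc)
    (by norm_num)
  nlinarith

theorem apply_le_norm_of_opNorm_le_one {φ : V →L[ℝ] ℝ} (hφ : ‖φ‖ ≤ 1) (u : V) : φ u ≤ ‖u‖ :=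
  (le_abs_self _).trans ((φ.le_of_opNorm_le hφ u).trans_eq (one_mul _))

theorem sine_le (x y : V) (t : ℝ) : sine x y ≤ ‖x + t • y‖ :=
  ciInf_le ⟨0, by rintro _ ⟨s, rfl⟩; positivity⟩ t

theorem sine_nonneg (x y : V) : 0 ≤ sine x y :=
  le_ciInf fun _ => norm_nonneg _

theorem sine_eq_of_forall_le {x y : V} {a : ℝ} (h : ∀ t : ℝ, ‖x + a • y‖ ≤ ‖x + t • y‖) :
    sine x y = ‖x + a • y‖ :=
  (sine_le x y a).antisymm (le_ciInf h)

theorem sine_eq_norm_of_bOrth {x y : V} (h : BOrth x y) : sine x y = ‖x‖ := by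
  simpa using sine_eq_of_forall_le (y := y) (a := 0) (by simpa using fun t => h t)

theorem exists_mem_Icc_forall_norm_add_smul_le {x y : V} (hx : ‖x‖ = 1) (hxy : ‖x + y‖ = 1) :
    ∃ a ∈ Icc (0 : ℝ) 1, ∀ t : ℝ, ‖x + a • y‖ ≤ ‖x + t • y‖ := by
  obtain ⟨a, ha, hmin⟩ := isCompact_Icc.exists_isMinOn (nonempty_Icc.2 (zero_le_one' ℝ))
    (f := fun t : ℝ => ‖x + t • y‖) (by fun_prop)
  refine ⟨a, ha, fun t => ?_⟩
  have hle : ‖x + a • y‖ ≤ 1 := by simpa [hx] using hmin (left_mem_Icc.2 (zero_le_one' ℝ))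
  rcases lt_or_ge t 0 with ht | ht
  · calc ‖x + a • y‖ ≤ ‖(1 - t) • x‖ - ‖-(t • (x + y))‖ := by
          rw [norm_neg, norm_smul, norm_smul, hx, hxy, Real.norm_of_nonneg (by linarith),
            Real.norm_of_nonpos ht.le]
          linarith
      _ ≤ ‖x + t • y‖ := by
          refine (norm_sub_norm_le _ _).trans_eq (congrArg _ ?_); module
  rcases le_or_gt t 1 with ht' | ht'
  · exact hmin ⟨ht, ht'⟩
  · calc ‖x + a • y‖ ≤ ‖t • (x + y)‖ - ‖(t - 1) • x‖ := by
          rw [norm_smul, norm_smul, hx, hxy, Real.norm_of_nonneg (by linarith),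
            Real.norm_of_nonneg (by linarith)]
          linarith
      _ ≤ ‖x + t • y‖ := by
          refine (norm_sub_norm_le _ _).trans_eq (congrArg _ ?_); module

theorem norm_mul_one_sub_mul_le_of_bOrth {x y : V} {b : ℝ} (h : BOrth x (y + b • x)) (a : ℝ) :
    ‖x‖ * (1 - a * b) ≤ ‖x + a • y‖ := by
  rcases le_or_gt 1 (a * b) with hab | hab
  · exact (mul_nonpos_of_nonneg_of_nonpos (norm_nonneg _) (by linarith)).trans (norm_nonneg _)
  have hvec : x + (a / (1 - a * b)) • (y + b • x) = (1 - a * b)⁻¹ • (x + a • y) := by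
    match_scalars <;> field_simp; ring
  have := h (a / (1 - a * b))
  rw [hvec, norm_smul, norm_inv, Real.norm_of_nonneg (by linarith)] at this
  rw [← div_eq_inv_mul, le_div_iff₀ (by linarith)] at this
  linarith

theorem one_sub_mul_le_sine_of_radon (hRadon : ∀ u v : V, BOrth u v → BOrth v u) {x y z : V}
    {a c : ℝ} (hx : ‖x‖ = 1) (hsum : x + y + z = 0) (ha : ∀ t : ℝ, ‖x + a • y‖ ≤ ‖x + t • y‖)
    (hc : ∀ t : ℝ, ‖z + c • x‖ ≤ ‖z + t • x‖) : 1 - a * (1 - c) ≤ sine x y := by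
  obtain rfl : z = -(x + y) := eq_neg_of_add_eq_zero_right hsum
  have hB : BOrth (y + (1 - c) • x) x := fun t => by
    convert hc (c - t) using 1 <;> rw [← norm_neg] <;> congr 1 <;> module
  have := norm_mul_one_sub_mul_le_of_bOrth (hRadon _ _ hB) a
  rwa [hx, one_mul, ← sine_eq_of_forall_le ha] at this

namespace Module.Basis

variable [FiniteDimensional ℝ V] (B : Basis (Fin 2) ℝ V)

noncomputable def areaForm : V →L[ℝ] V →L[ℝ] ℝ :=
  let c : Fin 2 → V →L[ℝ] ℝ := fun i => LinearMap.toContinuousLinearMap (B.coord i)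
  (c 0).smulRight (c 1) - (c 1).smulRight (c 0)

noncomputable def antinorm (y : V) : ℝ := ‖B.areaForm.flip y‖

theorem areaForm_apply (u v : V) :
    B.areaForm u v = B.repr u 0 * B.repr v 1 - B.repr u 1 * B.repr v 0 := by
  simp [areaForm]

theorem areaForm_swap (u v : V) : B.areaForm v u = -B.areaForm u v := by
  simp only [areaForm_apply]; ring

theorem areaForm_self (u : V) : B.areaForm u u = 0 := by
  simp only [areaForm_apply]; ring

theorem areaForm_smul_eq_add (u v w : V) :
    B.areaForm u v • w = B.areaForm w v • u + B.areaForm u w • v := by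
  apply B.repr.injective
  ext i
  fin_cases i <;> simp [areaForm_apply] <;> ring

theorem exists_areaForm_eq (φ : V →L[ℝ] ℝ) : ∃ p, B.areaForm p = φ := by
  refine ⟨φ (B 1) • B 0 - φ (B 0) • B 1, ContinuousLinearMap.ext fun u => ?_⟩
  conv_rhs => rw [← B.sum_repr u, map_sum]
  simp [areaForm_apply, Fin.sum_univ_two]
  ring

theorem eq_smul_of_areaForm_eq_zero {u v : V} (hv : v ≠ 0) (h : B.areaForm u v = 0) :
    ∃ c : ℝ, u = c • v := by
  obtain ⟨φ, -, hφv⟩ := exists_dual_vector ℝ v (norm_ne_zero_iff.2 hv)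
  obtain ⟨p, rfl⟩ := B.exists_areaForm_eq φ
  have hp : B.areaForm p v ≠ 0 := by simpa [hφv] using hv
  refine ⟨B.areaForm p u / B.areaForm p v, ?_⟩
  have := B.areaForm_smul_eq_add p v u
  rw [h, zero_smul, zero_add] at this
  rw [div_eq_inv_mul, mul_smul, ← this, smul_smul, inv_mul_cancel₀ hp, one_smul]

theorem areaForm_ne_zero_of_norm_eq_one {x y : V} (hx : ‖x‖ = 1) (hy : ‖y‖ = 1)
    (hxy : ‖x + y‖ = 1) : B.areaForm x y ≠ 0 := fun h => by
  obtain ⟨c, rfl⟩ := B.eq_smul_of_areaForm_eq_zero (norm_ne_zero_iff.1 (by simp [hy])) h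
  rw [show c • y + y = (c + 1) • y by module, _root_.norm_smul, hy, mul_one,
    Real.norm_eq_abs] at hxy
  rw [_root_.norm_smul, hy, mul_one, Real.norm_eq_abs] at hx
  rcases (abs_eq zero_le_one).1 hx with rfl | rfl <;> norm_num at hxy

theorem abs_areaForm_le_antinorm_mul (u v : V) : |B.areaForm u v| ≤ B.antinorm v * ‖u‖ :=
  (B.areaForm.flip v).le_opNorm u

theorem antinorm_nonneg (v : V) : 0 ≤ B.antinorm v := norm_nonneg _

theorem antinorm_le (v : V) : B.antinorm v ≤ ‖B.areaForm‖ * ‖v‖ := by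
  simpa [antinorm] using B.areaForm.flip.le_opNorm v

theorem sine_mul_abs_areaForm_le (x y w : V) :
    sine x y * |B.areaForm w y| ≤ |B.areaForm x y| * ‖w‖ := by
  rcases eq_or_ne (B.areaForm w y) 0 with h | h
  · simp [h]; positivity
  have hvec : x + (-(B.areaForm w x / B.areaForm w y)) • y =
      (B.areaForm x y / B.areaForm w y) • w := by
    have := B.areaForm_smul_eq_add w y x
    apply smul_right_injective V h
    dsimp only
    rw [smul_add, smul_smul, smul_smul, mul_neg, mul_div_cancel₀ _ h, mul_div_cancel₀ _ h, this,
      neg_smul]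
    abel
  have := sine_le x y (-(B.areaForm w x / B.areaForm w y))
  rw [hvec, _root_.norm_smul, Real.norm_eq_abs, abs_div, div_mul_eq_mul_div,
    le_div_iff₀ (abs_pos.2 h)] at this
  exact this

theorem sine_mul_antinorm (x y : V) : sine x y * B.antinorm y = |B.areaForm x y| := by
  refine le_antisymm ?_ ?_
  · rcases (sine_nonneg x y).eq_or_lt with hs | hs
    · rw [← hs, zero_mul]; exact abs_nonneg _
    rw [mul_comm, ← le_div_iff₀ hs]
    refine ContinuousLinearMap.opNorm_le_bound _ (by positivity) fun w => ?_
    rw [div_mul_eq_mul_div, le_div_iff₀ hs, mul_comm]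
    exact B.sine_mul_abs_areaForm_le x y w
  · rw [mul_comm, sine, Real.mul_iInf_of_nonneg (B.antinorm_nonneg y)]
    refine le_ciInf fun t => ?_
    simpa [B.areaForm_self] using B.abs_areaForm_le_antinorm_mul (x + t • y) y

variable (hRadon : ∀ u v : V, BOrth u v → BOrth v u)
include hRadon

theorem antinorm_mul_apply_le_of_radon {v : V} {φ : V →L[ℝ] ℝ} (hφ : ‖φ‖ ≤ 1)
    (hφv : φ v = ‖v‖) (u : V) : B.antinorm v * φ u ≤ ‖v‖ * B.antinorm u := by
  obtain ⟨p, rfl⟩ := B.exists_areaForm_eq φ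
  have hvp : BOrth v p := fun t => calc
    ‖v‖ = B.areaForm p (v + t • p) := by simp [B.areaForm_self, hφv]
    _ ≤ ‖v + t • p‖ := apply_le_norm_of_opNorm_le_one hφ _
  have hp : ‖p‖ * B.antinorm v = ‖v‖ := by
    rw [← sine_eq_norm_of_bOrth (hRadon _ _ hvp), sine_mul_antinorm, hφv, abs_norm]
  calc B.antinorm v * B.areaForm p u ≤ B.antinorm v * (B.antinorm u * ‖p‖) := by
        gcongr
        · exact B.antinorm_nonneg v
        · exact (le_abs_self _).trans (B.abs_areaForm_le_antinorm_mul p u)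
    _ = ‖v‖ * B.antinorm u := by rw [← hp]; ring

theorem antinorm_div_norm_sub_le_of_radon {u v : V} {φ χ : V →L[ℝ] ℝ} (hφ : ‖φ‖ ≤ 1)
    (hφv : φ v = ‖v‖) (hχ : ‖χ‖ ≤ 1) (hχu : χ u = ‖u‖) {m : ℝ} (hm : 0 < m) (hmu : m ≤ ‖u‖) :
    B.antinorm v / ‖v‖ - B.antinorm u / ‖u‖ ≤ ‖B.areaForm‖ / m * (χ (u - v) - φ (u - v)) := by
  have hu : 0 < ‖u‖ := hm.trans_le hmu
  set ρ := B.antinorm v / ‖v‖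
  have hρ : ρ ≤ ‖B.areaForm‖ :=
    div_le_of_le_mul₀ (norm_nonneg _) (by positivity) (B.antinorm_le v)
  have hφu := apply_le_norm_of_opNorm_le_one hφ u
  have hχv := apply_le_norm_of_opNorm_le_one hχ v
  have hρφ : ρ * φ u ≤ B.antinorm u := by
    rw [div_mul_eq_mul_div]
    exact div_le_of_le_mul₀ (norm_nonneg _) (B.antinorm_nonneg u)
      ((B.antinorm_mul_apply_le_of_radon hRadon hφ hφv u).trans_eq (mul_comm _ _))
  calc ρ - B.antinorm u / ‖u‖ ≤ ρ * (‖u‖ - φ u) / ‖u‖ := by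
        rw [mul_sub, sub_div, mul_div_cancel_right₀ _ hu.ne']
        gcongr
    _ ≤ ‖B.areaForm‖ * (χ (u - v) - φ (u - v)) / m := by
        have hX : ‖u‖ - φ u ≤ χ (u - v) - φ (u - v) := by
          rw [map_sub, map_sub, hφv, hχu]; linarith
        have hρ0 : 0 ≤ ρ := div_nonneg (B.antinorm_nonneg v) (norm_nonneg v)
        exact div_le_div₀ (mul_nonneg (by positivity) (by linarith))
          (mul_le_mul hρ hX (by linarith) (by positivity)) hm hmu
    _ = ‖B.areaForm‖ / m * (χ (u - v) - φ (u - v)) := by ring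

theorem antinorm_div_norm_le_of_radon {x y : V} (hxy : B.areaForm x y ≠ 0) :
    B.antinorm x / ‖x‖ ≤ B.antinorm y / ‖y‖ := by
  set e := y - x
  choose φ hφ hφd using fun t : ℝ => exists_dual_vector'' ℝ (x + t • e)
  have hpos : 0 < |B.areaForm x y| := abs_pos.2 hxy
  have hlow (t : ℝ) : |B.areaForm x y| ≤ ‖B.areaForm‖ * ‖e‖ * ‖x + t • e‖ := by
    have : |B.areaForm x y| = |B.areaForm e (x + t • e)| := by
      rw [← abs_neg]; congr 1; simp [e, areaForm_apply]; ring
    rw [this]; exact B.areaForm.le_opNorm₂ _ _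
  have hωe : 0 < ‖B.areaForm‖ * ‖e‖ := by
    have := hpos.trans_le (hlow 0)
    exact pos_of_mul_pos_left this (norm_nonneg _)
  set m := |B.areaForm x y| / (‖B.areaForm‖ * ‖e‖)
  have hm : 0 < m := div_pos hpos hωe
  have hmt (t : ℝ) : m ≤ ‖x + t • e‖ := (div_le_iff₀' hωe).2 (hlow t)
  have key := le_of_forall_sub_le_mul_sub (f := fun t => B.antinorm (x + t • e) / ‖x + t • e‖)
    (ψ := fun t => φ t e) (C := ‖B.areaForm‖ / m) zero_le_one fun s _ t _ _ => ?_
  · simpa [e] using key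
  have := B.antinorm_div_norm_sub_le_of_radon hRadon (hφ s) (hφd s) (hφ t) (hφd t) hm (hmt t)
  rwa [show x + t • e - (x + s • e) = (t - s) • e by module, map_smul, map_smul, smul_eq_mul,
    smul_eq_mul, ← mul_sub, ← mul_assoc] at this

theorem antinorm_div_norm_eq_of_radon {x y : V} (hxy : B.areaForm x y ≠ 0) :
    B.antinorm x / ‖x‖ = B.antinorm y / ‖y‖ :=
  (B.antinorm_div_norm_le_of_radon hRadon hxy).antisymm
    (B.antinorm_div_norm_le_of_radon hRadon (by rwa [areaForm_swap, neg_ne_zero]))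

end Module.Basis

theorem sine_eq_sine_of_radon (hV : finrank ℝ V = 2) (hRadon : ∀ u v : V, BOrth u v → BOrth v u)
    {x y z : V} (hx : ‖x‖ = 1) (hy : ‖y‖ = 1) (hz : ‖z‖ = 1) (hsum : x + y + z = 0) :
    sine y z = sine x y := by
  have := FiniteDimensional.of_finrank_eq_succ hV
  let B := finBasisOfFinrankEq ℝ V hV
  obtain rfl : z = -(x + y) := eq_neg_of_add_eq_zero_right hsum
  have hxy := B.areaForm_ne_zero_of_norm_eq_one hx hy (by rwa [norm_neg] at hz)
  have hyz : B.areaForm y (-(x + y)) = B.areaForm x y := by simp [Basis.areaForm_apply]; ring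
  have hN : B.antinorm (-(x + y)) = B.antinorm y := by
    have := (B.antinorm_div_norm_eq_of_radon hRadon (hyz ▸ hxy)).symm
    rwa [hy, hz, div_one, div_one] at this
  have hNy : B.antinorm y ≠ 0 := fun h =>
    hxy (abs_eq_zero.1 (by rw [← B.sine_mul_antinorm, h, mul_zero]))
  refine mul_right_cancel₀ hNy ?_
  calc sine y (-(x + y)) * B.antinorm y = |B.areaForm y (-(x + y))| := by
        rw [← hN, B.sine_mul_antinorm]
    _ = sine x y * B.antinorm y := by rw [hyz, B.sine_mul_antinorm]

theorem radon_equilateral_sine_ge (hV : finrank ℝ V = 2)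
    (hRadon : ∀ x y : V, BOrth x y → BOrth y x)
    (x y z : V) (hx : ‖x‖ = 1) (hy : ‖y‖ = 1) (hz : ‖z‖ = 1)
    (hsum : x + y + z = 0) : 3 / 4 ≤ sine x y := by
  have hsum' : y + z + x = 0 := by rw [← hsum]; abel
  have hsum'' : z + x + y = 0 := by rw [← hsum]; abel
  have hunit {u v w : V} (hw : ‖w‖ = 1) (h : u + v + w = 0) : ‖u + v‖ = 1 := by
    rwa [eq_neg_of_add_eq_zero_left h, norm_neg]
  obtain ⟨a, -, hamin⟩ := exists_mem_Icc_forall_norm_add_smul_le hx (hunit hz hsum)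
  obtain ⟨b, hb, hbmin⟩ := exists_mem_Icc_forall_norm_add_smul_le hy (hunit hx hsum')
  obtain ⟨c, hc, hcmin⟩ := exists_mem_Icc_forall_norm_add_smul_le hz (hunit hy hsum'')
  have hyz := sine_eq_sine_of_radon hV hRadon hx hy hz hsum
  have hzx := sine_eq_sine_of_radon hV hRadon hy hz hx hsum'
  have h₁ := one_sub_mul_le_sine_of_radon hRadon hx hsum hamin hcmin
  have h₂ := one_sub_mul_le_sine_of_radon hRadon hy hsum' hbmin hamin
  have h₃ := one_sub_mul_le_sine_of_radon hRadon hz hsum'' hcmin hbmin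
  rcases mul_one_sub_le_quarter_of_cyclic (a := a) hb hc with h | h | h <;> linarith
end

section
/- In a Radon plane, c_T(‖·‖) = 1 if and only if the unit circle is an affine regular hexagon, where c_T is the supremum of s(Δ) over equilateral triangles Δ. -/
open Module

variable {V : Type*} [NormedAddCommGroup V] [NormedSpace ℝ V]

def IsAffRegHexagon (V : Type*) [NormedAddCommGroup V] [NormedSpace ℝ V] : Prop :=
  ∃ u v : V, LinearIndependent ℝ ![u, v] ∧ ‖u‖ = 1 ∧ ‖v‖ = 1 ∧
    {w : V | ‖w‖ = 1} =
      frontier (convexHull ℝ ({u, -u, v, -v, u + v, -(u + v)} : Set V))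

noncomputable def triSines (V : Type*) [NormedAddCommGroup V] [NormedSpace ℝ V] : Set ℝ :=
  {r : ℝ | ∃ x y z : V, ‖x‖ = 1 ∧ ‖y‖ = 1 ∧ ‖z‖ = 1 ∧ x + y + z = 0 ∧ r = sine x y}

/-!
A unit triangle `x, y, -(x + y)` with `s = 1` has `x ⊥ y` (Birkhoff). In a Radon plane this gives
`y ⊥ x`, then `(x + y) ⊥ x` (as `‖x + y‖ = ‖y‖`) and `x ⊥ (x + y)`. Each orthogonality `p ⊥ q`
gives `|α| ≤ ‖α p + β q‖` for unit `p`, so a vector `a x + b y` of the unit ball has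
`|a|, |b|, |a - b| ≤ 1`: the unit ball is the hexagon with vertices `±x, ±y, ±(x + y)`.
Conversely, if the unit circle is the hexagon on `u, v`, the functional with `f u = 1`, `f v = 0` is
at most `1` on the hexagon, hence at most the norm; so `u ⊥ v`, and `u + v`, where `f` is maximal,
lies on the boundary of the hexagon, i.e. on the unit circle. So `u, v, -(u + v)` is a unit triangle
with `s = 1`. Finally `s ≤ 1` always, and `s` is upper semicontinuous (an infimum of continuous
functions), so it attains its supremum on the compact set of unit triangles: `c_T = 1` exactly when
some unit triangle has `s = 1`.
-/

open Metric Set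

lemma bddBelow_range_norm_add_smul (x y : V) : BddBelow (range fun t : ℝ => ‖x + t • y‖) :=
  ⟨0, by rintro _ ⟨t, rfl⟩; positivity⟩

lemma sine_le_norm (x y : V) : sine x y ≤ ‖x‖ := by
  simpa [sine] using ciInf_le (bddBelow_range_norm_add_smul x y) 0

lemma bOrth_iff_sine_eq_norm {x y : V} : BOrth x y ↔ sine x y = ‖x‖ :=
  ⟨fun h => le_antisymm (sine_le_norm x y) (le_ciInf h),
    fun h t => h ▸ ciInf_le (bddBelow_range_norm_add_smul x y) t⟩

lemma upperSemicontinuous_sine : UpperSemicontinuous fun p : V × V => sine p.1 p.2 :=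
  upperSemicontinuous_ciInf (fun p => bddBelow_range_norm_add_smul p.1 p.2) fun _ =>
    (continuous_fst.add (continuous_const.smul continuous_snd)).norm.upperSemicontinuous

lemma BOrth.abs_mul_norm_le {x y : V} (h : BOrth x y) (a b : ℝ) :
    |a| * ‖x‖ ≤ ‖a • x + b • y‖ := by
  rcases eq_or_ne a 0 with rfl | ha
  · simp
  · calc |a| * ‖x‖ ≤ |a| * ‖x + (b / a) • y‖ := by gcongr; exact h _
      _ = ‖a • x + b • y‖ := by
        rw [← Real.norm_eq_abs, ← norm_smul, smul_add, smul_smul, mul_div_cancel₀ _ ha]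

lemma BOrth.add_left_self {x y : V} (h : BOrth y x) (hxy : ‖x + y‖ = ‖y‖) :
    BOrth (x + y) x := fun t => by
  rw [hxy, show x + y + t • x = y + (1 + t) • x by module]
  exact h _

lemma BOrth.linearIndependent {x y : V} (h : BOrth x y) (hx : x ≠ 0) (hy : y ≠ 0) :
    LinearIndependent ℝ ![x, y] := by
  refine linearIndependent_fin2.2 ⟨hy, fun a hax => hx ?_⟩
  obtain rfl : a • y = x := hax
  simpa using h (-a)

lemma Convex.smul_add_smul_mem_of_zero_mem {E : Type*} [AddCommGroup E] [Module ℝ E] {s : Set E}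
    (hs : Convex ℝ s) (h0 : (0 : E) ∈ s) {p q : E} (hp : p ∈ s) (hq : q ∈ s) {α β : ℝ}
    (hα : 0 ≤ α) (hβ : 0 ≤ β) (hαβ : α + β ≤ 1) : α • p + β • q ∈ s := by
  rcases (add_nonneg hα hβ).eq_or_lt with hc | hc
  · obtain ⟨rfl, rfl⟩ : α = 0 ∧ β = 0 := ⟨by linarith, by linarith⟩
    simpa using h0
  · have hm : (α / (α + β)) • p + (β / (α + β)) • q ∈ s :=
      hs hp hq (by positivity) (by positivity) (by field_simp)
    convert hs.smul_mem_of_zero_mem h0 hm ⟨hc.le, hαβ⟩ using 1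
    rw [smul_add, smul_smul, smul_smul, mul_div_cancel₀ _ hc.ne', mul_div_cancel₀ _ hc.ne']

def hexagonVertices (x y : V) : Set V := {x, -x, y, -y, x + y, -(x + y)}

lemma smul_add_smul_mem_convexHull_hexagonVertices (x y : V) {a b : ℝ} (ha : |a| ≤ 1)
    (hb : |b| ≤ 1) (hab : |a - b| ≤ 1) :
    a • x + b • y ∈ convexHull ℝ (hexagonVertices x y) := by
  set H := convexHull ℝ (hexagonVertices x y)
  have h0 : (0 : V) ∈ H := by
    simpa using convex_convexHull ℝ _ (subset_convexHull ℝ _ (by simp [hexagonVertices]) : x ∈ H)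
      (subset_convexHull ℝ _ (by simp [hexagonVertices]) : -x ∈ H)
      (by norm_num : (0 : ℝ) ≤ 1 / 2) (by norm_num : (0 : ℝ) ≤ 1 / 2) (by norm_num)
  have combo : ∀ p ∈ hexagonVertices x y, ∀ q ∈ hexagonVertices x y, ∀ α β : ℝ,
      0 ≤ α → 0 ≤ β → α + β ≤ 1 → α • p + β • q = a • x + b • y → a • x + b • y ∈ H :=
    fun p hp q hq _ _ hα hβ hαβ heq => heq ▸
      (convex_convexHull ℝ _).smul_add_smul_mem_of_zero_mem h0 (subset_convexHull ℝ _ hp)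
        (subset_convexHull ℝ _ hq) hα hβ hαβ
  rw [abs_le] at ha hb hab
  -- in each of the six sectors cut out by the signs of `a`, `b`, `a - b`, the point is a
  -- combination, with weights summing to at most `1`, of the two vertices bounding the sector
  rcases le_total 0 a with ha0 | ha0 <;> rcases le_total 0 b with hb0 | hb0
  · rcases le_total a b with hle | hle
    · exact combo y (by simp [hexagonVertices]) (x + y) (by simp [hexagonVertices]) (b - a) a
        (by linarith) ha0 (by linarith) (by module)
    · exact combo x (by simp [hexagonVertices]) (x + y) (by simp [hexagonVertices]) (a - b) b
        (by linarith) hb0 (by linarith) (by module)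
  · exact combo x (by simp [hexagonVertices]) (-y) (by simp [hexagonVertices]) a (-b)
      ha0 (by linarith) (by linarith) (by module)
  · exact combo (-x) (by simp [hexagonVertices]) y (by simp [hexagonVertices]) (-a) b
      (by linarith) hb0 (by linarith) (by module)
  · rcases le_total a b with hle | hle
    · exact combo (-x) (by simp [hexagonVertices]) (-(x + y)) (by simp [hexagonVertices])
        (b - a) (-b) (by linarith) (by linarith) (by linarith) (by module)
    · exact combo (-y) (by simp [hexagonVertices]) (-(x + y)) (by simp [hexagonVertices])
        (a - b) (-a) (by linarith) (by linarith) (by linarith) (by module)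

lemma convexHull_hexagonVertices_subset_closedBall {x y : V} (hx : ‖x‖ ≤ 1) (hy : ‖y‖ ≤ 1)
    (hxy : ‖x + y‖ ≤ 1) : convexHull ℝ (hexagonVertices x y) ⊆ closedBall 0 1 :=
  (convex_closedBall 0 1).convexHull_subset_iff.2 <| by
    rintro p (rfl | rfl | rfl | rfl | rfl | rfl) <;> simpa only [mem_closedBall_zero_iff, norm_neg]

lemma closedBall_subset_convexHull_hexagonVertices (hV : finrank ℝ V = 2) {x y : V}
    (hx : ‖x‖ = 1) (hy : ‖y‖ = 1) (hli : LinearIndependent ℝ ![x, y]) (hxy : BOrth x y)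
    (hyx : BOrth y x) (hxxy : BOrth x (x + y)) :
    closedBall 0 1 ⊆ convexHull ℝ (hexagonVertices x y) := by
  intro w hw
  rw [mem_closedBall_zero_iff] at hw
  have hspan := hli.span_eq_top_of_card_eq_finrank (by simp [hV])
  rw [Matrix.range_cons_cons_empty] at hspan
  obtain ⟨a, b, rfl⟩ := Submodule.mem_span_pair.1 (hspan ▸ Submodule.mem_top : w ∈ _)
  refine smul_add_smul_mem_convexHull_hexagonVertices x y ?_ ?_ ?_
  · have := hxy.abs_mul_norm_le a b
    rw [hx, mul_one] at this
    exact this.trans hw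
  · have := hyx.abs_mul_norm_le b a
    rw [add_comm, hy, mul_one] at this
    exact this.trans hw
  · have := hxxy.abs_mul_norm_le (a - b) b
    rw [show (a - b) • x + b • (x + y) = a • x + b • y by module, hx, mul_one] at this
    exact this.trans hw

theorem isAffRegHexagon_of_one_mem_triSines (hV : finrank ℝ V = 2)
    (hRadon : ∀ x y : V, BOrth x y → BOrth y x) (h : 1 ∈ triSines V) : IsAffRegHexagon V := by
  obtain ⟨x, y, z, hx, hy, hz, hsum, hs⟩ := h
  have hxy1 : ‖x + y‖ = 1 := by rw [eq_neg_of_add_eq_zero_left hsum, norm_neg, hz]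
  have hxy : BOrth x y := bOrth_iff_sine_eq_norm.2 (hx ▸ hs.symm)
  have hyx : BOrth y x := hRadon _ _ hxy
  have hxxy : BOrth x (x + y) := hRadon _ _ (hyx.add_left_self (hxy1.trans hy.symm))
  have hx0 : x ≠ 0 := norm_ne_zero_iff.1 (by simp [hx])
  have hli := hxy.linearIndependent hx0 (norm_ne_zero_iff.1 (by simp [hy]))
  have hball : convexHull ℝ (hexagonVertices x y) = closedBall 0 1 :=
    (convexHull_hexagonVertices_subset_closedBall hx.le hy.le hxy1.le).antisymm
      (closedBall_subset_convexHull_hexagonVertices hV hx hy hli hxy hyx hxxy)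
  refine ⟨x, y, hli, hx, hy, ?_⟩
  change _ = frontier (convexHull ℝ (hexagonVertices x y))
  have : Nontrivial V := ⟨⟨x, 0, hx0⟩⟩
  rw [hball, frontier_closedBall']
  ext w
  simp

lemma LinearMap.le_norm_of_forall_norm_eq_one {f : V →ₗ[ℝ] ℝ} (h : ∀ w : V, ‖w‖ = 1 → f w ≤ 1)
    (w : V) : f w ≤ ‖w‖ := by
  rcases eq_or_ne w 0 with rfl | hw
  · simp
  · have hpos : 0 < ‖w‖ := norm_pos_iff.2 hw
    have := h (‖w‖⁻¹ • w) (by rw [norm_smul, norm_inv, norm_norm, inv_mul_cancel₀ hpos.ne'])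
    rwa [map_smul, smul_eq_mul, inv_mul_le_iff₀ hpos, mul_one] at this

lemma convexHull_hexagonVertices_subset_setOf_le {f : V →ₗ[ℝ] ℝ} {u v : V} (hu : f u = 1)
    (hv : f v = 0) : convexHull ℝ (hexagonVertices u v) ⊆ {w | f w ≤ 1} :=
  (convex_halfSpace_le f.isLinear 1).convexHull_subset_iff.2 <| by
    rintro p (rfl | rfl | rfl | rfl | rfl | rfl) <;> norm_num [hu, hv]

lemma IsMaxOn.notMem_interior [FiniteDimensional ℝ V] {f : V →ₗ[ℝ] ℝ}
    (hf : Function.Surjective f) {s : Set V} {p : V} (h : IsMaxOn f s p) : p ∉ interior s := by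
  intro hp
  have hmem : f p ∈ interior (Iic (f p)) :=
    interior_mono (image_subset_iff.2 fun _ hw => h hw : f '' s ⊆ Iic (f p))
      ((f.isOpenMap_of_finiteDimensional hf).image_interior_subset s (mem_image_of_mem f hp))
  rw [interior_Iic] at hmem
  exact lt_irrefl _ (mem_Iio.1 hmem)

theorem one_mem_triSines_of_isAffRegHexagon (hV : finrank ℝ V = 2) (h : IsAffRegHexagon V) :
    1 ∈ triSines V := by
  have : FiniteDimensional ℝ V := FiniteDimensional.of_finrank_pos (by omega)
  obtain ⟨u, v, hli, hu, hv, hsphere⟩ := h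
  set H := convexHull ℝ (hexagonVertices u v)
  change {w : V | ‖w‖ = 1} = frontier H at hsphere
  have hH : IsClosed H := ((toFinite {u, -u, v, -v, u + v, -(u + v)}).isCompact_convexHull (𝕜 := ℝ)).isClosed
  obtain ⟨f, hfu, hfv⟩ : ∃ f : V →ₗ[ℝ] ℝ, f u = 1 ∧ f v = 0 := by
    let B := basisOfLinearIndependentOfCardEqFinrank hli (by simp [hV])
    have hB : ⇑B = ![u, v] := coe_basisOfLinearIndependentOfCardEqFinrank hli _
    have hB0 : B 0 = u := by simp [hB]
    have hB1 : B 1 = v := by simp [hB]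
    refine ⟨B.coord 0, ?_, ?_⟩
    · rw [← hB0]; simp
    · rw [← hB1]; simp
  have hfH : H ⊆ {w | f w ≤ 1} := convexHull_hexagonVertices_subset_setOf_le hfu hfv
  have hf_le_norm : ∀ w, f w ≤ ‖w‖ :=
    f.le_norm_of_forall_norm_eq_one fun w hw => hfH (hH.frontier_subset (hsphere ▸ hw))
  have huv : ‖u + v‖ = 1 := by
    have hsurj : Function.Surjective f := fun r => ⟨r • u, by simp [hfu]⟩
    have hmax : IsMaxOn f H (u + v) := fun w hw => by simpa [hfu, hfv] using hfH hw
    have : u + v ∈ frontier H := hH.frontier_eq ▸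
      ⟨subset_convexHull ℝ _ (by simp [hexagonVertices]), hmax.notMem_interior hsurj⟩
    rwa [← hsphere] at this
  refine ⟨u, v, -(u + v), hu, hv, by rw [norm_neg, huv], by abel, ?_⟩
  rw [← hu, eq_comm, ← bOrth_iff_sine_eq_norm]
  intro t
  simpa [hu, hfu, hfv] using hf_le_norm (u + t • v)

lemma exists_norm_eq_one_norm_add_eq_one (h : 1 < Module.rank ℝ V) :
    ∃ x y : V, ‖x‖ = 1 ∧ ‖y‖ = 1 ∧ ‖x + y‖ = 1 := by
  have hS := isConnected_sphere h (0 : V) zero_le_one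
  obtain ⟨x, hx⟩ := hS.nonempty
  rw [mem_sphere_zero_iff_norm] at hx
  have hIcc := hS.isPreconnected.intermediate_value (a := -x) (b := x)
    (by simpa using hx) (by simpa using hx) (f := fun y => ‖x + y‖) (by fun_prop)
  obtain ⟨y, hy, hxy⟩ := hIcc (show (1 : ℝ) ∈ Icc ‖x + -x‖ ‖x + x‖ from
    ⟨by simp, by rw [← two_smul ℝ x, norm_smul]; norm_num [hx]⟩)
  exact ⟨x, y, hx, by simpa using hy, hxy⟩

lemma le_one_of_mem_triSines {r : ℝ} (hr : r ∈ triSines V) : r ≤ 1 := by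
  obtain ⟨x, y, -, hx, -, -, -, rfl⟩ := hr
  exact hx ▸ sine_le_norm x y

lemma triSines_eq_image : triSines V =
    (fun p : V × V => sine p.1 p.2) '' {p | ‖p.1‖ = 1 ∧ ‖p.2‖ = 1 ∧ ‖p.1 + p.2‖ = 1} := by
  ext r
  constructor
  · rintro ⟨x, y, z, hx, hy, hz, hsum, rfl⟩
    exact ⟨(x, y), ⟨hx, hy, by rw [eq_neg_of_add_eq_zero_left hsum, norm_neg, hz]⟩, rfl⟩
  · rintro ⟨⟨x, y⟩, ⟨hx, hy, hxy⟩, rfl⟩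
    exact ⟨x, y, -(x + y), hx, hy, by rw [norm_neg, hxy], by abel, rfl⟩

lemma sSup_triSines_mem [FiniteDimensional ℝ V] (h : 1 < finrank ℝ V) :
    sSup (triSines V) ∈ triSines V := by
  set K : Set (V × V) := {p | ‖p.1‖ = 1 ∧ ‖p.2‖ = 1 ∧ ‖p.1 + p.2‖ = 1}
  have hK : IsCompact K := by
    refine ((isCompact_sphere (0 : V) 1).prod (isCompact_sphere (0 : V) 1)).of_isClosed_subset ?_
      fun p hp => ⟨by simpa using hp.1, by simpa using hp.2.1⟩
    exact (isClosed_eq (by fun_prop) (by fun_prop)).inter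
      ((isClosed_eq (by fun_prop) (by fun_prop)).inter (isClosed_eq (by fun_prop) (by fun_prop)))
  obtain ⟨x, y, hxy⟩ := exists_norm_eq_one_norm_add_eq_one (V := V)
    (by rw [← finrank_eq_rank]; exact_mod_cast h)
  obtain ⟨p, hp, hmax⟩ :=
    (upperSemicontinuous_sine.upperSemicontinuousOn K).exists_isMaxOn ⟨(x, y), hxy⟩ hK
  rw [triSines_eq_image, (show IsGreatest _ _ from ⟨mem_image_of_mem _ hp,
    forall_mem_image.2 fun q hq => hmax hq⟩).csSup_eq]
  exact mem_image_of_mem _ hp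

lemma sSup_triSines_eq_one_iff [FiniteDimensional ℝ V] (h : 1 < finrank ℝ V) :
    sSup (triSines V) = 1 ↔ 1 ∈ triSines V :=
  ⟨fun h1 => h1 ▸ sSup_triSines_mem h,
    fun h1 => IsGreatest.csSup_eq ⟨h1, fun _ => le_one_of_mem_triSines⟩⟩

theorem cT_eq_one_iff (hV : finrank ℝ V = 2)
    (hRadon : ∀ x y : V, BOrth x y → BOrth y x) :
    sSup (triSines V) = 1 ↔ IsAffRegHexagon V := by
  have : FiniteDimensional ℝ V := FiniteDimensional.of_finrank_pos (by omega)
  rw [sSup_triSines_eq_one_iff (by omega)]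
  exact ⟨isAffRegHexagon_of_one_mem_triSines hV hRadon, one_mem_triSines_of_isAffRegHexagon hV⟩
end
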